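/- arXiv:2508.00111 — 2 statements merged into one kernel-verified Lean document; each statement's English description precedes it below -/
import Mathlib

section
/- If A ∈ H_n (with n ≥ 1) has rank one, then for every vector v ∈ ℂ^n one has v*F_A v ≤ per(A)·‖v‖₂²; equivalently, the largest eigenvalue of the Hermitian matrix F_A is at most per(A). -/
open Matrix Finset
open scoped ComplexOrder

/-- `F_A`, with entries `f i j = A i j * per (A(i,j))`, where `A(i,j)` is obtained from `A` by
deleting the `i`-th row and the `j`-th column. -/
noncomputable def Fmat {n : ℕ} (A : Matrix (Fin (n + 1)) (Fin (n + 1)) ℂ) :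
    Matrix (Fin (n + 1)) (Fin (n + 1)) ℂ :=
  Matrix.of fun i j => A i j * (A.submatrix i.succAbove j.succAbove).permanent

/-!
A matrix of rank at most one is an outer product `x yᵀ`, so its permanent, and the permanent of
each of its square submatrices, is a factorial times a product of entries of `x` and `y`. Hence
`F_A` is the constant matrix with all entries `n! ∏ aₖₖ`, while `per A = (n+1)! ∏ aₖₖ`, and the
`aₖₖ` are nonnegative because `A ⪰ 0`. The claim becomes `|∑ vᵢ|² ≤ (n+1) ‖v‖²`, which is
Cauchy–Schwarz.
-/

namespace Matrix

theorem exists_eq_vecMulVec_of_rank_le_one {m n K : Type*} [Fintype n] [Field K]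
    {A : Matrix m n K} (hA : A.rank ≤ 1) : ∃ x y, A = vecMulVec x y := by
  have := FiniteDimensional.span_of_finite K (Set.finite_range A.col)
  rw [rank_eq_finrank_span_cols, finrank_le_one_iff] at hA
  obtain ⟨g, hg⟩ := hA
  choose c hc using fun j => hg ⟨A.col j, Submodule.subset_span ⟨j, rfl⟩⟩
  refine ⟨g, c, ext fun i j => ?_⟩
  simpa [vecMulVec_apply, mul_comm] using congr_fun (congrArg Subtype.val (hc j)).symm i

theorem permanent_vecMulVec {n R : Type*} [Fintype n] [DecidableEq n] [CommSemiring R]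
    (x y : n → R) :
    (vecMulVec x y).permanent = (Fintype.card n).factorial * ∏ i, x i * y i := by
  simp only [permanent, vecMulVec_apply, prod_mul_distrib, Equiv.prod_comp, sum_const,
    card_univ, Fintype.card_perm, nsmul_eq_mul]

theorem permanent_eq_factorial_mul_prod_diag_of_rank_le_one {n K : Type*} [Fintype n]
    [DecidableEq n] [Field K] {A : Matrix n n K} (hA : A.rank ≤ 1) :
    A.permanent = (Fintype.card n).factorial * ∏ i, A i i := by
  obtain ⟨x, y, rfl⟩ := exists_eq_vecMulVec_of_rank_le_one hA
  exact permanent_vecMulVec x y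

end Matrix

theorem Fmat_vecMulVec {n : ℕ} (x y : Fin (n + 1) → ℂ) (i j : Fin (n + 1)) :
    Fmat (vecMulVec x y) i j = n.factorial * ∏ k, x k * y k := by
  have hsub : (vecMulVec x y).submatrix i.succAbove j.succAbove =
      vecMulVec (x ∘ i.succAbove) (y ∘ j.succAbove) := rfl
  rw [Fmat, of_apply, hsub, permanent_vecMulVec, Fintype.card_fin, vecMulVec_apply,
    prod_mul_distrib, prod_mul_distrib, Fin.prod_univ_succAbove x i,
    Fin.prod_univ_succAbove y j]
  simp only [Function.comp_apply]
  ring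

theorem Fmat_eq_of_rank_le_one {n : ℕ} {A : Matrix (Fin (n + 1)) (Fin (n + 1)) ℂ}
    (hA : A.rank ≤ 1) (i j : Fin (n + 1)) : Fmat A i j = n.factorial * ∏ k, A k k := by
  obtain ⟨x, y, rfl⟩ := exists_eq_vecMulVec_of_rank_le_one hA
  exact Fmat_vecMulVec x y i j

theorem norm_sum_sq_le_card_mul_sum_norm_sq {ι E : Type*} [SeminormedAddCommGroup E]
    (s : Finset ι) (f : ι → E) : ‖∑ i ∈ s, f i‖ ^ 2 ≤ #s * ∑ i ∈ s, ‖f i‖ ^ 2 :=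
  (pow_le_pow_left₀ (norm_nonneg _) (norm_sum_le s f) 2).trans (sq_sum_le_card_mul_sum_sq ..)

theorem Complex.sum_sum_conj_mul_const_mul {ι : Type*} [Fintype ι] (c : ℂ) (v : ι → ℂ) :
    ∑ i, ∑ j, (starRingEnd ℂ) (v i) * c * v j = c * (‖∑ i, v i‖ ^ 2 : ℝ) := by
  rw [ofReal_pow, ← conj_mul', map_sum, sum_mul_sum]
  simp only [mul_comm, mul_left_comm, mul_sum]

/-- If `A` is a rank-one positive semidefinite Hermitian matrix, then
`v* F_A v ≤ per(A) · ‖v‖₂²` for every vector `v`, i.e. `λ_max(F_A) ≤ per(A)`. -/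
theorem stmt7 {n : ℕ} (A : Matrix (Fin (n + 1)) (Fin (n + 1)) ℂ) (hA : A.PosSemidef)
    (hrank : A.rank = 1) :
    ∀ v : Fin (n + 1) → ℂ,
      (∑ i, ∑ j, (starRingEnd ℂ) (v i) * Fmat A i j * v j).re ≤
        A.permanent.re * ∑ i, ‖v i‖ ^ 2 := by
  intro v
  have hdiag : 0 ≤ (n.factorial * ∏ k, A k k : ℂ) :=
    mul_nonneg (Nat.cast_nonneg _) (prod_nonneg fun k _ => hA.diag_nonneg)
  obtain ⟨c, hc, hc_eq⟩ : ∃ c : ℝ, 0 ≤ c ∧ (c : ℂ) = n.factorial * ∏ k, A k k :=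
    RCLike.nonneg_iff_exists_ofReal.mp hdiag
  have hF (i j) : Fmat A i j = c := (Fmat_eq_of_rank_le_one hrank.le i j).trans hc_eq.symm
  have hper : A.permanent = ((n + 1) * c : ℝ) := by
    rw [permanent_eq_factorial_mul_prod_diag_of_rank_le_one hrank.le, Fintype.card_fin,
      Nat.factorial_succ, Nat.cast_mul, mul_assoc, ← hc_eq]
    push_cast
    ring
  simp_rw [hF, Complex.sum_sum_conj_mul_const_mul, hper, ← Complex.ofReal_mul, Complex.ofReal_re]
  have hbound := norm_sum_sq_le_card_mul_sum_norm_sq univ v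
  rw [card_univ, Fintype.card_fin, Nat.cast_succ] at hbound
  rw [mul_comm (_ + 1 : ℝ), mul_assoc]
  exact mul_le_mul_of_nonneg_left hbound hc
end

section
/- Let X = X_R + i·X_I be the 2×16 complex matrix with X_R having rows (25, −23, 29, 11, −20, 47, 18, 29, 35, −25, −32, −28, −18, 25, 12, −36) and (8, 38, −11, 34, 61, 42, −23, 10, 35, 24, 11, 9, 13, −9, 34, 22), and X_I having rows (30, 20, 51, −43, −11, 47, 4, 27, −26, −2, 11, 37, 64, 26, −28, 23) and (0, 20, 10, 4, 28, 12, −46, 24, −43, 10, −17, −63, −23, 50, −40, 15). Then A = X*X is a 16×16 positive semidefinite Hermitian matrix for which there exists a real vector v ∈ ℝ^16 with ∑_{i,j} v_i·Re(f_{i,j})·v_j > per(A)·‖v‖₂²; equivalently, the largest eigenvalue of the real symmetric matrix Re(F_A) strictly exceeds per(A). -/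
/-!
`A = X* X` has rank at most two, `A i j = conj (x i) * x j + conj (y i) * y j` for the rows
`x, y` of `X`, and so do its minors `A(i,j)`. For such matrices the permanent collapses to a
short sum, `per (Pᵀ Q) = ∑ k, k! (m - k)! e_k(P) e_k(Q)`, where `e_k(P)` is the `k`-th
coefficient of `f = ∏ i, (P 0 i * X + P 1 i)`. This follows by expanding along the first column,
since `∑ i, P 0 i * e_k(P without column i)` and `∑ i, P 1 i * e_k(P without column i)` are the
`k`-th coefficients of `f'` and of `(m + 1) f - X f'`.
As `X` has Gaussian-integer entries, `per A` and every entry of `F_A` become explicit Gaussian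
integers, and for the integer vector `v = (1, -3, 1, 1, -4, 2, -4, 2, 4, -2, -1, -2, -1, 3, 4, -1)`
the inequality `per A * ‖v‖² < vᵀ Re(F_A) v` is an exact integer computation.
-/

open Matrix Finset
open scoped ComplexOrder

/-- The real part `X_R` of the `2 × 16` matrix `X`. -/
def XR : Matrix (Fin 2) (Fin 16) ℝ :=
  !![25, -23, 29, 11, -20, 47, 18, 29, 35, -25, -32, -28, -18, 25, 12, -36;
     8, 38, -11, 34, 61, 42, -23, 10, 35, 24, 11, 9, 13, -9, 34, 22]

/-- The imaginary part `X_I` of the `2 × 16` matrix `X`. -/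
def XI : Matrix (Fin 2) (Fin 16) ℝ :=
  !![30, 20, 51, -43, -11, 47, 4, 27, -26, -2, 11, 37, 64, 26, -28, 23;
     0, 20, 10, 4, 28, 12, -46, 24, -43, 10, -17, -63, -23, 50, -40, 15]

/-- `X = X_R + i X_I`. -/
noncomputable def Xmat : Matrix (Fin 2) (Fin 16) ℂ :=
  Matrix.of fun r c => (XR r c : ℂ) + Complex.I * (XI r c : ℂ)

open Polynomial

namespace Matrix

section CommSemiring

variable {R S : Type*} [CommSemiring R] [CommSemiring S]

theorem permanent_map {n : Type*} [DecidableEq n] [Fintype n] (f : R →+* S) (M : Matrix n n R) :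
    (M.map f).permanent = f M.permanent := by
  simp [permanent, map_sum, map_prod]

theorem permanent_succ_column_zero {n : ℕ} (A : Matrix (Fin (n + 1)) (Fin (n + 1)) R) :
    A.permanent = ∑ i : Fin (n + 1), A i 0 * (A.submatrix i.succAbove Fin.succ).permanent := by
  rw [permanent, Finset.univ_perm_fin_succ, ← Finset.univ_product_univ]
  simp only [Finset.sum_map, Equiv.toEmbedding_apply, Finset.sum_product, Matrix.submatrix]
  refine Finset.sum_congr rfl fun i _ => Fin.cases ?_ (fun i => ?_) i
  · simp only [Fin.prod_univ_succ, permanent, Finset.mul_sum,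
      Equiv.Perm.decomposeFin_symm_apply_zero, Equiv.Perm.decomposeFin_symm_apply_succ,
      Fin.succAbove_zero, Equiv.swap_self, Equiv.coe_refl, id, of_apply]
  · rw [← permanent_permute_cols i.cycleRange, permanent, Finset.mul_sum]
    refine Finset.sum_congr rfl fun σ _ => ?_
    simp only [Fin.prod_univ_succ, submatrix_apply, of_apply, id_eq, Fin.succAbove_cycleRange,
      Equiv.Perm.decomposeFin_symm_apply_zero, Equiv.Perm.decomposeFin_symm_apply_succ]

noncomputable def prodLinear {m : ℕ} (P : Matrix (Fin 2) (Fin m) R) : R[X] :=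
  ∏ i, (C (P 0 i) * X + C (P 1 i))

theorem prodLinear_succ {m : ℕ} (P : Matrix (Fin 2) (Fin (m + 1)) R) :
    prodLinear P = (C (P 0 0) * X + C (P 1 0)) * prodLinear (P.submatrix id Fin.succ) :=
  Fin.prod_univ_succ _

theorem coeff_prodLinear_of_lt {m k : ℕ} (P : Matrix (Fin 2) (Fin m) R) (h : m < k) :
    (prodLinear P).coeff k = 0 := by
  have hdeg : (prodLinear P).natDegree ≤ ∑ _i : Fin m, 1 :=
    (natDegree_prod_le _ _).trans (Finset.sum_le_sum fun _ _ => natDegree_linear_le)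
  refine coeff_eq_zero_of_natDegree_lt (hdeg.trans_lt ?_)
  simpa using h

theorem derivative_prodLinear {m : ℕ} (P : Matrix (Fin 2) (Fin (m + 1)) R) :
    derivative (prodLinear P) = ∑ i, C (P 0 i) * prodLinear (P.submatrix id i.succAbove) := by
  classical
  rw [prodLinear, derivative_prod_finset]
  refine Finset.sum_congr rfl fun i _ => ?_
  rw [← Finset.compl_singleton, ← Fin.image_succAbove_univ,
    Finset.prod_image Fin.succAbove_right_injective.injOn, derivative_add, derivative_C_mul_X,
    derivative_C, add_zero, mul_comm]
  rfl

theorem coeff_prodLinear_succ {m : ℕ} (Q : Matrix (Fin 2) (Fin (m + 1)) R) (k : ℕ) :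
    (prodLinear Q).coeff k = Q 0 0 * (X * prodLinear (Q.submatrix id Fin.succ)).coeff k +
      Q 1 0 * (prodLinear (Q.submatrix id Fin.succ)).coeff k := by
  rw [prodLinear_succ, add_mul, mul_assoc, coeff_add, coeff_C_mul, coeff_C_mul]

end CommSemiring

section CommRing

variable {R : Type*} [CommRing R]

theorem sum_C_mul_prodLinear_succAbove {m : ℕ} (P : Matrix (Fin 2) (Fin (m + 1)) R) :
    ∑ i, C (P 1 i) * prodLinear (P.submatrix id i.succAbove) =
      (m + 1) • prodLinear P - X * derivative (prodLinear P) := by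
  have hsum : ∑ i, (C (P 0 i) * X + C (P 1 i)) * prodLinear (P.submatrix id i.succAbove) =
      (m + 1) • prodLinear P := by
    calc _ = ∑ _i : Fin (m + 1), prodLinear P :=
          sum_congr rfl fun i _ => (Fin.prod_univ_succAbove _ i).symm
      _ = _ := by simp
  rw [derivative_prodLinear, ← hsum, mul_sum, eq_sub_iff_add_eq, ← sum_add_distrib]
  exact sum_congr rfl fun i _ => by ring

theorem sum_mul_coeff_prodLinear_succAbove {m : ℕ} (P : Matrix (Fin 2) (Fin (m + 1)) R)
    (a b : R) (k : ℕ) :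
    ∑ i, (P 0 i * a + P 1 i * b) * (prodLinear (P.submatrix id i.succAbove)).coeff k =
      a * ((k + 1) * (prodLinear P).coeff (k + 1)) +
        b * ((m + 1 - k) * (prodLinear P).coeff k) := by
  have h0 : ∑ i, P 0 i * (prodLinear (P.submatrix id i.succAbove)).coeff k =
      (k + 1) * (prodLinear P).coeff (k + 1) := by
    simpa [finsetSum_coeff, coeff_derivative, mul_comm] using
      (congrArg (coeff · k) (derivative_prodLinear P)).symm
  have h1 : ∑ i, P 1 i * (prodLinear (P.submatrix id i.succAbove)).coeff k =
      (m + 1 - k) * (prodLinear P).coeff k := by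
    have := congrArg (coeff · k) (sum_C_mul_prodLinear_succAbove P)
    simp only [finsetSum_coeff, coeff_C_mul, coeff_sub, coeff_smul] at this
    rw [this]
    cases k with
    | zero => simp [nsmul_eq_mul]
    | succ k => rw [coeff_X_mul, coeff_derivative, nsmul_eq_mul]; push_cast; ring
  rw [← h0, ← h1, mul_sum, mul_sum, ← sum_add_distrib]
  exact sum_congr rfl fun i _ => by ring

open scoped Nat in
theorem permanent_transpose_mul {m : ℕ} (P Q : Matrix (Fin 2) (Fin m) R) :
    (Pᵀ * Q).permanent = ∑ k ∈ range (m + 1),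
      ((k ! * (m - k)! : ℕ) : R) * (prodLinear P).coeff k * (prodLinear Q).coeff k := by
  induction m with
  | zero => rw [permanent_isEmpty]; simp [prodLinear]
  | succ m ih =>
    set p := prodLinear P
    set q := prodLinear (Q.submatrix id Fin.succ) with hq_def
    have hcol : (Pᵀ * Q).permanent = ∑ k ∈ range (m + 1),
        ((k ! * (m - k)! : ℕ) : R) * q.coeff k *
          (Q 0 0 * ((k + 1) * p.coeff (k + 1)) + Q 1 0 * ((m + 1 - k) * p.coeff k)) := by
      have hentry (i : Fin (m + 1)) : (Pᵀ * Q) i 0 = P 0 i * Q 0 0 + P 1 i * Q 1 0 := by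
        simp [mul_apply, Fin.sum_univ_two]
      have hminor (i : Fin (m + 1)) : ((Pᵀ * Q).submatrix i.succAbove Fin.succ).permanent =
          ∑ k ∈ range (m + 1), ((k ! * (m - k)! : ℕ) : R) *
            (prodLinear (P.submatrix id i.succAbove)).coeff k * q.coeff k :=
        ih (P.submatrix id i.succAbove) (Q.submatrix id Fin.succ)
      rw [permanent_succ_column_zero]
      simp only [hentry, hminor, mul_sum]
      rw [sum_comm]
      refine sum_congr rfl fun k _ => ?_
      rw [← sum_mul_coeff_prodLinear_succAbove, mul_sum]
      exact sum_congr rfl fun i _ => by ring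
    have hq : q.coeff (m + 1) = 0 := coeff_prodLinear_of_lt _ (Nat.lt_succ_self m)
    rw [hcol]
    simp only [coeff_prodLinear_succ Q, ← hq_def, mul_add, sum_add_distrib]
    rw [sum_range_succ' (n := m + 1), sum_range_succ (n := m + 1), ← sum_add_distrib]
    simp only [coeff_X_mul_zero, coeff_X_mul, hq, mul_zero, add_zero, ← sum_add_distrib]
    refine sum_congr rfl fun k hk_mem => ?_
    have hk : k ≤ m := Nat.lt_succ_iff.mp (mem_range.mp hk_mem)
    have hshift : ((k + 1)! * (m + 1 - (k + 1))! : ℕ) = (k + 1) * (k ! * (m - k)!) := by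
      rw [Nat.add_sub_add_right, Nat.factorial_succ, mul_assoc]
    have hlast : ((k ! * (m + 1 - k)! : ℕ) : R) = (m + 1 - k) * (k ! * (m - k)! : ℕ) := by
      rw [Nat.succ_sub hk, Nat.factorial_succ]
      push_cast [Nat.cast_sub hk]
      ring
    rw [hshift, hlast]
    push_cast
    ring

end CommRing

end Matrix

namespace Polynomial

variable {R : Type*} [CommSemiring R]

/-- `mulLinear a b c l` is the coefficient list of `(a * X + b) * p`, where `l` lists the
coefficients of `p` and `c` is the coefficient preceding `l` (`0` at the start). -/
def mulLinear (a b : R) : R → List R → List R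
  | c, [] => [a * c]
  | c, d :: l => (a * c + b * d) :: mulLinear a b d l

def prodLinearCoeffs : List (R × R) → List R
  | [] => [1]
  | x :: l => mulLinear x.1 x.2 0 (prodLinearCoeffs l)

theorem getD_mulLinear (a b c : R) (l : List R) (k : ℕ) :
    (mulLinear a b c l).getD k 0 = a * (c :: l).getD k 0 + b * l.getD k 0 := by
  induction l generalizing c k with
  | nil => cases k <;> simp [mulLinear]
  | cons d l ih =>
    cases k <;> simp only [mulLinear, List.getD_cons_zero, List.getD_cons_succ, ih]

theorem coeff_prod_linear_eq_getD (l : List (R × R)) (k : ℕ) :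
    ((l.map fun x : R × R => C x.1 * X + C x.2).prod).coeff k =
      (prodLinearCoeffs l).getD k 0 := by
  induction l generalizing k with
  | nil => cases k <;> simp [prodLinearCoeffs, coeff_one]
  | cons x l ih =>
    rw [List.map_cons, List.prod_cons, prodLinearCoeffs, getD_mulLinear]
    cases k <;> simp only [add_mul, mul_assoc, coeff_add, coeff_C_mul, coeff_X_mul,
      coeff_X_mul_zero, List.getD_cons_zero, List.getD_cons_succ, ih]

end Polynomial

theorem Matrix.coeff_prodLinear_eq_getD {R : Type*} [CommSemiring R] {m : ℕ}
    (P : Matrix (Fin 2) (Fin m) R) (k : ℕ) :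
    (prodLinear P).coeff k = (prodLinearCoeffs (List.ofFn fun i => (P 0 i, P 1 i))).getD k 0 := by
  rw [← coeff_prod_linear_eq_getD, List.map_ofFn, List.prod_ofFn]
  rfl

def Xint : Matrix (Fin 2) (Fin 16) GaussianInt :=
  !![⟨25, 30⟩, ⟨-23, 20⟩, ⟨29, 51⟩, ⟨11, -43⟩, ⟨-20, -11⟩, ⟨47, 47⟩, ⟨18, 4⟩, ⟨29, 27⟩,
      ⟨35, -26⟩, ⟨-25, -2⟩, ⟨-32, 11⟩, ⟨-28, 37⟩, ⟨-18, 64⟩, ⟨25, 26⟩, ⟨12, -28⟩,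
      ⟨-36, 23⟩;
    ⟨8, 0⟩, ⟨38, 20⟩, ⟨-11, 10⟩, ⟨34, 4⟩, ⟨61, 28⟩, ⟨42, 12⟩, ⟨-23, -46⟩, ⟨10, 24⟩,
      ⟨35, -43⟩, ⟨24, 10⟩, ⟨11, -17⟩, ⟨9, -63⟩, ⟨13, -23⟩, ⟨-9, 50⟩, ⟨34, -40⟩,
      ⟨22, 15⟩]

theorem Xmat_eq_map : Xmat = Xint.map GaussianInt.toComplex := by
  ext r c
  fin_cases r <;> fin_cases c <;> simp [Xmat, XR, XI, Xint, GaussianInt.toComplex_def', mul_comm]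

theorem conjTranspose_Xmat_mul_Xmat :
    Xmatᴴ * Xmat = (Xintᴴ * Xint).map GaussianInt.toComplex := by
  rw [Xmat_eq_map, ← conjTranspose_map _ GaussianInt.toComplex_star, ← Matrix.map_mul]

theorem Fmat_map {R : Type*} [CommSemiring R] {n : ℕ} (f : R →+* ℂ)
    (M : Matrix (Fin (n + 1)) (Fin (n + 1)) R) (i j : Fin (n + 1)) :
    Fmat (M.map f) i j = f (M i j * (M.submatrix i.succAbove j.succAbove).permanent) := by
  rw [Fmat, of_apply, submatrix_map, permanent_map, map_apply, map_mul]

def witness : Fin 16 → ℤ := ![1, -3, 1, 1, -4, 2, -4, 2, 4, -2, -1, -2, -1, 3, 4, -1]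

theorem witness_inequality :
    (Xintᴴ * Xint).permanent.re * ∑ i, witness i ^ 2 <
      ∑ i, ∑ j, witness i *
        ((Xintᴴ * Xint) i j * ((Xintᴴ * Xint).submatrix i.succAbove j.succAbove).permanent).re *
          witness j := by
  have hconj : Xintᴴ = (Xint.map star)ᵀ := rfl
  have hminor (i j : Fin 16) : ((Xint.map star)ᵀ * Xint).submatrix i.succAbove j.succAbove =
      ((Xint.map star).submatrix id i.succAbove)ᵀ * Xint.submatrix id j.succAbove := rfl
  rw [hconj]
  simp only [hminor, permanent_transpose_mul, coeff_prodLinear_eq_getD]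
  decide +kernel

/-- The `16 × 16` matrix `A = X* X` is positive semidefinite Hermitian and there
is a real vector `v ∈ ℝ¹⁶` with `∑ i j, v i · Re((F_A) i j) · v j > per(A) · ‖v‖₂²`;
equivalently, the largest eigenvalue of `Re(F_A)` strictly exceeds `per(A)`. -/
theorem stmt10 :
    (Xmatᴴ * Xmat).PosSemidef ∧
      ∃ v : Fin 16 → ℝ,
        (∑ i, ∑ j, v i * (Fmat (Xmatᴴ * Xmat) i j).re * v j) >
          (Xmatᴴ * Xmat).permanent.re * ∑ i, (v i) ^ 2 := by
  refine ⟨posSemidef_conjTranspose_mul_self Xmat, fun i => witness i, ?_⟩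
  simp only [conjTranspose_Xmat_mul_Xmat, Fmat_map, permanent_map, ← GaussianInt.intCast_re]
  exact_mod_cast witness_inequality
end
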